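/- Let a > 0 and h : ℝ → ℝ be the quadratic h(λ) = α₁λ - (α₂/2)λ² with α₁, α₂ > 0, and let δ ∈ (0, π/a). There is no ε₀ ∈ (0, π/a - δ) such that the function r ↦ h'''(r-δ)·sin(ar)/a + 2h''(r-δ)cos(ar) + a·h'(r-δ)(sin(ar) - 1/sin(ar)) + a²·h(r-δ)cos(ar)(2 + 1/sin²(ar)) vanishes identically on the interval [δ, δ+ε₀). -/

import Mathlib

/-!
Multiplying the equation by `sin (a r) ^ 2` clears its poles and leaves an entire function of `r`
that vanishes on an interval, hence everywhere. At a zero `t` of `sin (a t)` only the term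
`a ^ 2 * h (t - δ) * cos (a t)` survives, and `cos (a t) = ± 1` there, so `h (t - δ) = 0`. Thus the
quadratic `h` would vanish at the two distinct nonzero points `π / a - δ` and `2 π / a - δ`, while
its only nonzero root is `2 α₁ / α₂`.
-/

open Real Filter Topology

namespace Poiseuille

noncomputable def residual (h : ℝ → ℝ) (a δ r : ℝ) : ℝ :=
  deriv (deriv (deriv h)) (r - δ) * sin (a * r) / a
    + 2 * deriv (deriv h) (r - δ) * cos (a * r)
    + a * deriv h (r - δ) * (sin (a * r) - 1 / sin (a * r))
    + a ^ 2 * h (r - δ) * cos (a * r) * (2 + 1 / (sin (a * r)) ^ 2)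

noncomputable def clearedResidual (h : ℝ → ℝ) (a δ r : ℝ) : ℝ :=
  deriv (deriv (deriv h)) (r - δ) * sin (a * r) ^ 3 / a
    + 2 * deriv (deriv h) (r - δ) * cos (a * r) * sin (a * r) ^ 2
    + a * deriv h (r - δ) * (sin (a * r) ^ 3 - sin (a * r))
    + a ^ 2 * h (r - δ) * cos (a * r) * (2 * sin (a * r) ^ 2 + 1)

variable {h : ℝ → ℝ} {a δ : ℝ}

theorem sin_sq_mul_residual {r : ℝ} (hs : sin (a * r) ≠ 0) :
    sin (a * r) ^ 2 * residual h a δ r = clearedResidual h a δ r := by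
  unfold residual clearedResidual
  field_simp

theorem clearedResidual_of_sin_eq_zero {t : ℝ} (hs : sin (a * t) = 0) :
    clearedResidual h a δ t = a ^ 2 * h (t - δ) * cos (a * t) := by
  simp [clearedResidual, hs]

theorem analyticAt_clearedResidual (hh : ∀ x, AnalyticAt ℝ h x) (r : ℝ) :
    AnalyticAt ℝ (clearedResidual h a δ) r := by
  unfold clearedResidual
  fun_prop

theorem apply_sub_eq_zero_of_residual_eqOn (hh : ∀ x, AnalyticAt ℝ h x) (ha : a ≠ 0)
    {u v : ℝ} (huv : u < v) (hsin : ∀ r ∈ Set.Ioo u v, sin (a * r) ≠ 0)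
    (hres : ∀ r ∈ Set.Ioo u v, residual h a δ r = 0) {t : ℝ} (ht : sin (a * t) = 0) :
    h (t - δ) = 0 := by
  have hzero_near : clearedResidual h a δ =ᶠ[𝓝 ((u + v) / 2)] 0 := by
    have hmid : (u + v) / 2 ∈ Set.Ioo u v := ⟨by linarith, by linarith⟩
    filter_upwards [isOpen_Ioo.mem_nhds hmid] with r hr
    rw [← sin_sq_mul_residual (hsin r hr), hres r hr, mul_zero, Pi.zero_apply]
  have hzero : clearedResidual h a δ = 0 :=
    AnalyticOnNhd.eq_of_eventuallyEq (fun r _ ↦ analyticAt_clearedResidual hh r)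
      analyticOnNhd_const hzero_near
  have hcos : cos (a * t) ≠ 0 := by
    intro hc
    simpa [ht, hc] using sin_sq_add_cos_sq (a * t)
  have := congrFun hzero t
  rw [clearedResidual_of_sin_eq_zero ht, Pi.zero_apply] at this
  simpa [ha, hcos] using this

end Poiseuille

theorem eq_of_quadratic_eq_zero {α₁ α₂ x y : ℝ} (hα₂ : α₂ ≠ 0) (hx : x ≠ 0) (hy : y ≠ 0)
    (hxr : α₁ * x - α₂ / 2 * x ^ 2 = 0) (hyr : α₁ * y - α₂ / 2 * y ^ 2 = 0) : x = y := by
  have hroot : ∀ z ≠ 0, α₁ * z - α₂ / 2 * z ^ 2 = 0 → α₂ * z = 2 * α₁ := by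
    intro z hz hzr
    have : z * (2 * α₁ - α₂ * z) = 0 := by linear_combination 2 * hzr
    linarith [(mul_eq_zero.mp this).resolve_left hz]
  exact mul_left_cancel₀ hα₂ ((hroot x hx hxr).trans (hroot y hy hyr).symm)

theorem stmt_11_general (a δ α₁ α₂ : ℝ) (ha : 0 < a) (hδ0 : 0 < δ)
    (hα₂ : 0 < α₂)
    (h : ℝ → ℝ) (hh : ∀ l, h l = α₁ * l - α₂ / 2 * l ^ 2) :
    ¬ ∃ ε₀ ∈ Set.Ioo 0 (π / a - δ), ∀ r ∈ Set.Ico δ (δ + ε₀),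
      deriv (deriv (deriv h)) (r - δ) * Real.sin (a * r) / a
      + 2 * deriv (deriv h) (r - δ) * Real.cos (a * r)
      + a * deriv h (r - δ) * (Real.sin (a * r) - 1 / Real.sin (a * r))
      + a ^ 2 * h (r - δ) * Real.cos (a * r) * (2 + 1 / (Real.sin (a * r)) ^ 2) = 0 := by
  rintro ⟨ε₀, ⟨hε₀, hε₀_lt⟩, hres⟩
  obtain rfl : h = fun l ↦ α₁ * l - α₂ / 2 * l ^ 2 := funext hh
  have hsin : ∀ r ∈ Set.Ioo δ (δ + ε₀), sin (a * r) ≠ 0 := by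
    refine fun r hr ↦ (sin_pos_of_pos_of_lt_pi (mul_pos ha (by linarith [hr.1])) ?_).ne'
    exact (lt_div_iff₀' ha).mp (by linarith [hr.2])
  have hroot : ∀ t, sin (a * t) = 0 → α₁ * (t - δ) - α₂ / 2 * (t - δ) ^ 2 = 0 := fun t ↦
    Poiseuille.apply_sub_eq_zero_of_residual_eqOn (by fun_prop) ha.ne' (by linarith) hsin
      (fun r hr ↦ hres r (Set.Ioo_subset_Ico_self hr))
  have hπa : a * (π / a) = π := mul_div_cancel₀ _ ha.ne'
  have hroot₁ := hroot (π / a) (by rw [hπa, sin_pi])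
  have hroot₂ := hroot (2 * (π / a)) (by rw [mul_left_comm, hπa, sin_two_pi])
  have := eq_of_quadratic_eq_zero hα₂.ne' (by linarith) (by linarith) hroot₁ hroot₂
  linarith

theorem stmt_11 (a δ α₁ α₂ : ℝ) (ha : 0 < a) (hδ0 : 0 < δ) (hδ : δ < π / a)
    (hα₁ : 0 < α₁) (hα₂ : 0 < α₂)
    (h : ℝ → ℝ) (hh : ∀ l, h l = α₁ * l - α₂ / 2 * l ^ 2) :
    ¬ ∃ ε₀ ∈ Set.Ioo 0 (π / a - δ), ∀ r ∈ Set.Ico δ (δ + ε₀),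
      deriv (deriv (deriv h)) (r - δ) * Real.sin (a * r) / a
      + 2 * deriv (deriv h) (r - δ) * Real.cos (a * r)
      + a * deriv h (r - δ) * (Real.sin (a * r) - 1 / Real.sin (a * r))
      + a ^ 2 * h (r - δ) * Real.cos (a * r) * (2 + 1 / (Real.sin (a * r)) ^ 2) = 0 :=
  stmt_11_general a δ α₁ α₂ ha hδ0 hα₂ h hh
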